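/- In a finite MDP, a state s satisfies ⟨Almost⟩(q W r) if and only if, in the two-player interpretation, Player 1 has a strategy such that all plays from s satisfy q W r. -/
import Mathlib


open Classical

structure MDP (S A : Type) [Fintype S] where
  isP1 : S → Prop
  Av : S → Finset A
  avNe : ∀ s, isP1 s → (Av s).Nonempty
  δ1 : S → A → S
  δP : S → S → ℝ
  δP_nonneg : ∀ s t, 0 ≤ δP s t
  δP_sum : ∀ s, ¬ isP1 s → ∑ t, δP s t = 1

variable {S A : Type} [Fintype S]

structure Strat (M : MDP S A) where
  act : S → List S → A
  mem : ∀ s h, act s h ∈ M.Av s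

noncomputable def nextD (M : MDP S A) (σ : Strat M) (h : List S) (s t : S) : ℝ :=
  if M.isP1 s then (if t = M.δ1 s (σ.act s h) then 1 else 0) else M.δP s t

noncomputable def prU (M : MDP S A) (q r : S → Prop) (σ : Strat M) :
    ℕ → List S → S → ℝ
  | 0, _, s => if r s then 1 else 0
  | n+1, h, s =>
      if r s then 1 else
      if q s then ∑ t, nextD M σ h s t * prU M q r σ n (s :: h) t else 0

noncomputable def prSafe (M : MDP S A) (q : S → Prop) (σ : Strat M) :
    ℕ → List S → S → ℝ
  | 0, _, s => if q s then 1 else 0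
  | n+1, h, s =>
      if q s then ∑ t, nextD M σ h s t * prSafe M q σ n (s :: h) t else 0

/-- Probability that the play from `s` under `σ` satisfies `q U r`. -/
noncomputable def PrUntil (M : MDP S A) (q r : S → Prop) (σ : Strat M) (s : S) : ℝ :=
  ⨆ n, prU M q r σ n [] s

/-- Probability that the play from `s` under `σ` satisfies `□ q`. -/
noncomputable def PrGlob (M : MDP S A) (q : S → Prop) (σ : Strat M) (s : S) : ℝ :=
  ⨅ n, prSafe M q σ n [] s

/-- Probability of the weak until `q W r ≡ (q U r) ∨ □ q`. -/
noncomputable def PrWeakUntil (M : MDP S A) (q r : S → Prop) (σ : Strat M) (s : S) : ℝ :=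
  PrUntil M q r σ s + PrGlob M (fun t => q t ∧ ¬ r t) σ s

def hist (ω : ℕ → S) (n : ℕ) : List S := ((List.range n).map ω).reverse

/-- Plays of the two-player interpretation consistent with Player-1 strategy `σ`. -/
def ConsPlay (M : MDP S A) (σ : Strat M) (ω : ℕ → S) : Prop :=
  ∀ n, (M.isP1 (ω n) → ω (n+1) = M.δ1 (ω n) (σ.act (ω n) (hist ω n)))
     ∧ (¬ M.isP1 (ω n) → 0 < M.δP (ω n) (ω (n+1)))

def WUplay (q r : S → Prop) (ω : ℕ → S) : Prop :=
  (∃ k, r (ω k) ∧ ∀ j < k, q (ω j)) ∨ ∀ k, q (ω k)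

/-- Player 1 can enforce `q W r` in the two-player interpretation. -/
def Enforce (M : MDP S A) (q r : S → Prop) (s : S) : Prop :=
  ∃ σ : Strat M, ∀ ω : ℕ → S, ω 0 = s → ConsPlay M σ ω → WUplay q r ω

/-- `s ⊨ ⟨Almost⟩(q W r)`. -/
def AlmostWeakUntil (M : MDP S A) (q r : S → Prop) (s : S) : Prop :=
  ∃ σ : Strat M, PrWeakUntil M q r σ s = 1
section Aux

variable {S A : Type} [Fintype S] (M : MDP S A) (σ : Strat M) (q r : S → Prop)

lemma nextD_nonneg (h : List S) (s t : S) : 0 ≤ nextD M σ h s t := by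
  unfold nextD; split_ifs <;> first | exact M.δP_nonneg s t | norm_num

lemma nextD_sum (h : List S) (s : S) : ∑ t, nextD M σ h s t = 1 := by
  unfold nextD
  by_cases hp : M.isP1 s
  · simp [hp]
  · simp [hp, M.δP_sum s hp]

lemma combo_le_one {f : S → ℝ} (hf : ∀ t, f t ≤ 1) (h : List S) (s : S) :
    ∑ t, nextD M σ h s t * f t ≤ 1 := by
  calc ∑ t, nextD M σ h s t * f t ≤ ∑ t, nextD M σ h s t :=
        Finset.sum_le_sum fun t _ =>
          mul_le_of_le_one_right (nextD_nonneg M σ h s t) (hf t)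
    _ = 1 := nextD_sum M σ h s

lemma combo_nonneg {f : S → ℝ} (hf : ∀ t, 0 ≤ f t) (h : List S) (s : S) :
    0 ≤ ∑ t, nextD M σ h s t * f t :=
  Finset.sum_nonneg fun t _ => mul_nonneg (nextD_nonneg M σ h s t) (hf t)

lemma prU_nonneg : ∀ (n : ℕ) (h : List S) (s : S), 0 ≤ prU M q r σ n h s
  | 0, h, s => by simp only [prU]; split_ifs <;> norm_num
  | n+1, h, s => by
      simp only [prU]; split_ifs
      · norm_num
      · exact combo_nonneg M σ (fun t => prU_nonneg n (s :: h) t) h s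
      · exact le_refl 0

lemma prU_le_one : ∀ (n : ℕ) (h : List S) (s : S), prU M q r σ n h s ≤ 1
  | 0, h, s => by simp only [prU]; split_ifs <;> norm_num
  | n+1, h, s => by
      simp only [prU]; split_ifs
      · norm_num
      · exact combo_le_one M σ (fun t => prU_le_one n (s :: h) t) h s
      · norm_num

lemma prSafe_nonneg : ∀ (n : ℕ) (h : List S) (s : S), 0 ≤ prSafe M q σ n h s
  | 0, h, s => by simp only [prSafe]; split_ifs <;> norm_num
  | n+1, h, s => by
      simp only [prSafe]; split_ifs
      · exact combo_nonneg M σ (fun t => prSafe_nonneg n (s :: h) t) h s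
      · exact le_refl 0

lemma prSafe_le_one : ∀ (n : ℕ) (h : List S) (s : S), prSafe M q σ n h s ≤ 1
  | 0, h, s => by simp only [prSafe]; split_ifs <;> norm_num
  | n+1, h, s => by
      simp only [prSafe]; split_ifs
      · exact combo_le_one M σ (fun t => prSafe_le_one n (s :: h) t) h s
      · norm_num

lemma prU_le_succ : ∀ (n : ℕ) (h : List S) (s : S),
    prU M q r σ n h s ≤ prU M q r σ (n+1) h s
  | 0, h, s => by
      simp only [prU]; split_ifs
      · norm_num
      · exact combo_nonneg M σ (fun t => prU_nonneg M σ q r 0 (s :: h) t) h s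
      · exact le_refl 0
  | n+1, h, s => by
      simp only [prU]; split_ifs
      · norm_num
      · exact Finset.sum_le_sum fun t _ =>
          mul_le_mul_of_nonneg_left (prU_le_succ n (s :: h) t) (nextD_nonneg M σ h s t)
      · exact le_refl 0

end Aux
noncomputable def F {S A : Type} [Fintype S] (M : MDP S A) (σ : Strat M)
    (q r : S → Prop) (n : ℕ) (h : List S) (s : S) : ℝ :=
  prU M q r σ n h s + prSafe M (fun t => q t ∧ ¬ r t) σ n h s

section FAux

variable {S A : Type} [Fintype S] (M : MDP S A) (σ : Strat M) (q r : S → Prop)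

lemma F_zero (h : List S) (s : S) :
    F M σ q r 0 h s = if r s then 1 else if q s then 1 else 0 := by
  simp only [F, prU, prSafe]
  by_cases hr : r s <;> by_cases hq : q s <;> simp [hr, hq]

lemma F_succ (n : ℕ) (h : List S) (s : S) :
    F M σ q r (n+1) h s = if r s then 1 else
      if q s then ∑ t, nextD M σ h s t * F M σ q r n (s :: h) t else 0 := by
  simp only [F, prU, prSafe]
  by_cases hr : r s
  · simp [hr]
  · by_cases hq : q s
    · simp only [hr, hq, if_neg, if_pos, not_false_iff, true_and, if_true]
      rw [← Finset.sum_add_distrib]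
      exact Finset.sum_congr rfl fun t _ => by ring
    · simp [hr, hq]

lemma F_le_one : ∀ (n : ℕ) (h : List S) (s : S), F M σ q r n h s ≤ 1
  | 0, h, s => by rw [F_zero]; split_ifs <;> norm_num
  | n+1, h, s => by
      rw [F_succ]; split_ifs
      · exact le_refl 1
      · exact combo_le_one M σ (fun t => F_le_one n (s :: h) t) h s
      · norm_num

lemma F_nonneg (n : ℕ) (h : List S) (s : S) : 0 ≤ F M σ q r n h s :=
  add_nonneg (prU_nonneg M σ q r n h s) (prSafe_nonneg M σ _ n h s)

lemma F_succ_le : ∀ (n : ℕ) (h : List S) (s : S),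
    F M σ q r (n+1) h s ≤ F M σ q r n h s
  | 0, h, s => by
      rw [F_succ, F_zero]
      split_ifs
      · exact le_refl 1
      · exact combo_le_one M σ (fun t => F_le_one M σ q r 0 (s :: h) t) h s
      · exact le_refl 0
  | n+1, h, s => by
      rw [F_succ, F_succ]
      split_ifs
      · exact le_refl 1
      · exact Finset.sum_le_sum fun t _ =>
          mul_le_mul_of_nonneg_left (F_succ_le n (s :: h) t) (nextD_nonneg M σ h s t)
      · exact le_refl 0

lemma F_eq_one_of_r (n : ℕ) (h : List S) (s : S) (hr : r s) : F M σ q r n h s = 1 := by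
  cases n
  · rw [F_zero, if_pos hr]
  · rw [F_succ, if_pos hr]

lemma F_eq_zero (n : ℕ) (h : List S) (s : S) (hq : ¬ q s) (hr : ¬ r s) :
    F M σ q r n h s = 0 := by
  cases n
  · rw [F_zero, if_neg hr, if_neg hq]
  · rw [F_succ, if_neg hr, if_neg hq]

end FAux
section Prop3

variable {S A : Type} [Fintype S] (M : MDP S A) (σ : Strat M) (q r : S → Prop)

lemma F_propagate {n : ℕ} {h : List S} {s : S}
    (h1 : F M σ q r (n+1) h s = 1) (hq : q s) (hr : ¬ r s)
    {t : S} (ht : 0 < nextD M σ h s t) : F M σ q r n (s :: h) t = 1 := by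
  rw [F_succ, if_neg hr, if_pos hq] at h1
  have key : ∑ u, nextD M σ h s u * (1 - F M σ q r n (s :: h) u) = 0 := by
    simp only [mul_sub, mul_one, Finset.sum_sub_distrib, nextD_sum, h1, sub_self]
  have h2 := (Finset.sum_eq_zero_iff_of_nonneg (fun u _ =>
      mul_nonneg (nextD_nonneg M σ h s u)
        (by linarith [F_le_one M σ q r n (s :: h) u]))).mp key t (Finset.mem_univ t)
  have h3 := (mul_eq_zero.mp h2).resolve_left (ne_of_gt ht)
  linarith

lemma F_fail {n : ℕ} {h : List S} {s : S}
    (h1 : F M σ q r (n+1) h s < 1) (hq : q s) (hr : ¬ r s) :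
    ∃ t, 0 < nextD M σ h s t ∧ F M σ q r n (s :: h) t < 1 := by
  by_contra hc
  push_neg at hc
  rw [F_succ, if_neg hr, if_pos hq] at h1
  have : ∑ t, nextD M σ h s t * F M σ q r n (s :: h) t = 1 := by
    rw [show (1:ℝ) = ∑ t, nextD M σ h s t from (nextD_sum M σ h s).symm]
    refine Finset.sum_congr rfl fun t _ => ?_
    rcases (nextD_nonneg M σ h s t).eq_or_lt with he | hlt
    · rw [← he, zero_mul]
    · have := le_antisymm (F_le_one M σ q r n (s :: h) t) (hc t hlt)
      rw [this, mul_one]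
  linarith

lemma prWU_eq_one_iff (s : S) :
    PrWeakUntil M q r σ s = 1 ↔ ∀ n, F M σ q r n [] s = 1 := by
  have hbddU : BddAbove (Set.range fun n => prU M q r σ n [] s) :=
    ⟨1, by rintro _ ⟨n, rfl⟩; exact prU_le_one M σ q r n [] s⟩
  have hbddS : BddBelow (Set.range fun n => prSafe M (fun t => q t ∧ ¬ r t) σ n [] s) :=
    ⟨0, by rintro _ ⟨n, rfl⟩; exact prSafe_nonneg M σ _ n [] s⟩
  have hmono : Monotone fun n => prU M q r σ n [] s :=
    monotone_nat_of_le_succ fun n => prU_le_succ M σ q r n [] s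
  have hanti : Antitone fun n => F M σ q r n [] s :=
    antitone_nat_of_succ_le fun n => F_succ_le M σ q r n [] s
  constructor
  · intro hP n
    have hub : ∀ m, prU M q r σ m [] s ≤ F M σ q r n [] s - PrGlob M (fun t => q t ∧ ¬ r t) σ s := by
      intro m
      have h1 : prU M q r σ m [] s ≤ prU M q r σ (max m n) [] s := hmono (le_max_left m n)
      have h2 : F M σ q r (max m n) [] s ≤ F M σ q r n [] s := hanti (le_max_right m n)
      have h3 : PrGlob M (fun t => q t ∧ ¬ r t) σ s ≤
          prSafe M (fun t => q t ∧ ¬ r t) σ (max m n) [] s := ciInf_le hbddS (max m n)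
      have h4 : prU M q r σ (max m n) [] s + prSafe M (fun t => q t ∧ ¬ r t) σ (max m n) [] s
          = F M σ q r (max m n) [] s := rfl
      linarith
    have h5 : PrUntil M q r σ s ≤ F M σ q r n [] s - PrGlob M (fun t => q t ∧ ¬ r t) σ s :=
      ciSup_le hub
    have h6 := F_le_one M σ q r n [] s
    have hP' : PrUntil M q r σ s + PrGlob M (fun t => q t ∧ ¬ r t) σ s = 1 := hP
    linarith
  · intro hF
    have h1 : ∀ n, prU M q r σ n [] s ≤ PrUntil M q r σ s := fun n => le_ciSup hbddU n
    have h2 : ∀ n, PrGlob M (fun t => q t ∧ ¬ r t) σ s ≤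
        prSafe M (fun t => q t ∧ ¬ r t) σ n [] s := fun n => ciInf_le hbddS n
    have h3 : PrUntil M q r σ s ≤ 1 - PrGlob M (fun t => q t ∧ ¬ r t) σ s := by
      refine ciSup_le fun n => ?_
      have := hF n
      have h4 : prU M q r σ n [] s + prSafe M (fun t => q t ∧ ¬ r t) σ n [] s = 1 := this
      linarith [h2 n]
    have h5 : 1 - PrUntil M q r σ s ≤ PrGlob M (fun t => q t ∧ ¬ r t) σ s := by
      refine le_ciInf fun n => ?_
      have h4 : prU M q r σ n [] s + prSafe M (fun t => q t ∧ ¬ r t) σ n [] s = 1 := hF n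
      linarith [h1 n]
    show PrUntil M q r σ s + PrGlob M (fun t => q t ∧ ¬ r t) σ s = 1
    linarith

end Prop3
section DirB

variable {S A : Type} [Fintype S] (M : MDP S A) (σ : Strat M) (q r : S → Prop)

lemma hist_zero (ω : ℕ → S) : hist ω 0 = [] := by simp [hist]

lemma hist_succ (ω : ℕ → S) (n : ℕ) : hist ω (n+1) = ω n :: hist ω n := by
  simp [hist, List.range_succ]

lemma cons_nextD_pos {ω : ℕ → S} (hω : ConsPlay M σ ω) (k : ℕ) :
    0 < nextD M σ (hist ω k) (ω k) (ω (k+1)) := by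
  unfold nextD
  by_cases hp : M.isP1 (ω k)
  · rw [if_pos hp, if_pos ((hω k).1 hp)]; norm_num
  · rw [if_neg hp]; exact (hω k).2 hp

lemma wins_of_allgood {s : S} (hF : ∀ n, F M σ q r n [] s = 1) :
    ∀ ω : ℕ → S, ω 0 = s → ConsPlay M σ ω → WUplay q r ω := by
  intro ω h0 hω
  have key : ∀ k, (∃ j ≤ k, r (ω j) ∧ ∀ i < j, q (ω i)) ∨
      ((∀ j ≤ k, q (ω j) ∧ ¬ r (ω j)) ∧ ∀ n, F M σ q r n (hist ω k) (ω k) = 1) := by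
    intro k
    induction k with
    | zero =>
        rw [hist_zero, h0]
        by_cases hr : r s
        · exact Or.inl ⟨0, le_refl 0, by rw [h0]; exact hr, by omega⟩
        · right
          have hq : q s := by
            by_contra hq
            have := F_eq_zero M σ q r 0 [] s hq hr
            rw [hF 0] at this; norm_num at this
          refine ⟨fun j hj => ?_, hF⟩
          interval_cases j
          rw [h0]; exact ⟨hq, hr⟩
    | succ k ih =>
        rcases ih with ⟨j, hj, hrj, hqj⟩ | ⟨hall, hFk⟩
        · exact Or.inl ⟨j, le_trans hj (Nat.le_succ k), hrj, hqj⟩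
        · have hqk := (hall k (le_refl k)).1
          have hrk := (hall k (le_refl k)).2
          have hpos := cons_nextD_pos M σ hω k
          have hFn : ∀ n, F M σ q r n (hist ω (k+1)) (ω (k+1)) = 1 := by
            intro n
            rw [hist_succ]
            exact F_propagate M σ q r (hFk (n+1)) hqk hrk hpos
          by_cases hr1 : r (ω (k+1))
          · exact Or.inl ⟨k+1, le_refl _, hr1, fun i hi => (hall i (by omega)).1⟩
          · right
            have hq1 : q (ω (k+1)) := by
              by_contra hq1
              have := F_eq_zero M σ q r 0 (hist ω (k+1)) (ω (k+1)) hq1 hr1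
              rw [hFn 0] at this; norm_num at this
            refine ⟨fun j hj => ?_, hFn⟩
            rcases Nat.lt_succ_iff_lt_or_eq.mp (Nat.lt_succ_of_le hj) with h | h
            · exact hall j (by omega)
            · rw [h]; exact ⟨hq1, hr1⟩
  by_cases hex : ∃ k, r (ω k) ∧ ∀ j < k, q (ω j)
  · exact Or.inl hex
  · refine Or.inr fun k => ?_
    rcases key k with ⟨j, hj, hrj, hqj⟩ | ⟨hall, _⟩
    · exact absurd ⟨j, hrj, hqj⟩ hex
    · exact (hall k (le_refl k)).1

end DirB
section DirA

lemma exists_pos_δP {S A : Type} [Fintype S] (M : MDP S A) (x : S)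
    (hp : ¬ M.isP1 x) : ∃ t, 0 < M.δP x t := by
  by_contra hc
  push_neg at hc
  have h1 : ∑ t, M.δP x t ≤ 0 := Finset.sum_nonpos fun t _ => hc t
  rw [M.δP_sum x hp] at h1
  linarith

noncomputable def dflt {S A : Type} [Fintype S] (M : MDP S A) (σ : Strat M)
    (h : List S) (x : S) : S :=
  if hp : M.isP1 x then M.δ1 x (σ.act x h)
  else Classical.choose (exists_pos_δP M x hp)

noncomputable def rank {S A : Type} [Fintype S] (M : MDP S A) (σ : Strat M)
    (q r : S → Prop) (h : List S) (x : S) : ℕ :=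
  sInf {n | F M σ q r n h x < 1}

noncomputable def gnext {S A : Type} [Fintype S] (M : MDP S A) (σ : Strat M)
    (q r : S → Prop) (h : List S) (x : S) : S :=
  if hb : ∃ t, 0 < nextD M σ h x t ∧
      F M σ q r (rank M σ q r h x - 1) (x :: h) t < 1
  then Classical.choose hb else dflt M σ h x

noncomputable def pl {S A : Type} [Fintype S] (M : MDP S A) (σ : Strat M)
    (q r : S → Prop) (s : S) : ℕ → List S × S
  | 0 => ([], s)
  | k+1 => ((pl M σ q r s k).2 :: (pl M σ q r s k).1,
      gnext M σ q r (pl M σ q r s k).1 (pl M σ q r s k).2)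

variable {S A : Type} [Fintype S] (M : MDP S A) (σ : Strat M) (q r : S → Prop)

lemma dflt_pos (h : List S) (x : S) : 0 < nextD M σ h x (dflt M σ h x) := by
  unfold nextD dflt
  by_cases hp : M.isP1 x
  · rw [dif_pos hp, if_pos hp, if_pos rfl]; norm_num
  · rw [dif_neg hp, if_neg hp]
    exact Classical.choose_spec (exists_pos_δP M x hp)

lemma gnext_pos (h : List S) (x : S) : 0 < nextD M σ h x (gnext M σ q r h x) := by
  unfold gnext
  split
  · next hb => exact (Classical.choose_spec hb).1
  · exact dflt_pos M σ h x

lemma pl_fst (s : S) : ∀ k, (pl M σ q r s k).1 = hist (fun i => (pl M σ q r s i).2) k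
  | 0 => by simp [pl, hist]
  | k+1 => by
      rw [hist_succ]
      show (pl M σ q r s k).2 :: (pl M σ q r s k).1 = _
      rw [pl_fst s k]

lemma consPlay_pl (s : S) : ConsPlay M σ (fun i => (pl M σ q r s i).2) := by
  intro k
  have hpos : 0 < nextD M σ (hist (fun i => (pl M σ q r s i).2) k)
      ((pl M σ q r s k).2) ((pl M σ q r s (k+1)).2) := by
    rw [← pl_fst]
    exact gnext_pos M σ q r _ _
  constructor
  · intro hp
    unfold nextD at hpos
    rw [if_pos hp] at hpos
    by_contra hne
    rw [if_neg hne] at hpos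
    linarith
  · intro hp
    unfold nextD at hpos
    rwa [if_neg hp] at hpos

lemma bad_not_r {h : List S} {x : S} (hb : ∃ n, F M σ q r n h x < 1) : ¬ r x := by
  intro hr
  obtain ⟨n, hn⟩ := hb
  rw [F_eq_one_of_r M σ q r n h x hr] at hn
  linarith

lemma spoil {s : S} (hbad : ∃ n, F M σ q r n [] s < 1) :
    ¬ WUplay q r (fun i => (pl M σ q r s i).2) := by
  set ω : ℕ → S := fun i => (pl M σ q r s i).2 with hω
  have key : ∀ k, (∃ j ≤ k, ¬ q (ω j) ∧ (∀ i ≤ j, ¬ r (ω i)) ∧ ∀ i < j, q (ω i)) ∨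
      ((∀ j ≤ k, q (ω j) ∧ ¬ r (ω j)) ∧
        (∃ n, F M σ q r n (pl M σ q r s k).1 (pl M σ q r s k).2 < 1) ∧
        rank M σ q r (pl M σ q r s k).1 (pl M σ q r s k).2 + k ≤ rank M σ q r [] s) := by
    intro k
    induction k with
    | zero =>
        have hr0 : ¬ r (ω 0) := bad_not_r M σ q r hbad
        by_cases hq0 : q (ω 0)
        · right
          refine ⟨fun j hj => ?_, hbad, by show rank M σ q r [] s + 0 ≤ rank M σ q r [] s; omega⟩
          interval_cases j
          exact ⟨hq0, hr0⟩
        · exact Or.inl ⟨0, le_refl 0, hq0,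
            fun i hi => by interval_cases i; exact hr0, fun i hi => by omega⟩
    | succ k ih =>
        rcases ih with ⟨j, hj, hh⟩ | ⟨hall, hbadk, hrank⟩
        · exact Or.inl ⟨j, by omega, hh⟩
        · -- right branch: step
          set h := (pl M σ q r s k).1
          set x := (pl M σ q r s k).2
          have hqx := (hall k (le_refl k)).1
          have hrx := (hall k (le_refl k)).2
          have hne : {n | F M σ q r n h x < 1}.Nonempty := hbadk
          have hrk : F M σ q r (rank M σ q r h x) h x < 1 := Nat.sInf_mem hne
          have hr1 : 1 ≤ rank M σ q r h x := by
            rcases Nat.eq_zero_or_pos (rank M σ q r h x) with h0 | h0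
            · exfalso
              rw [h0, F_zero, if_neg hrx, if_pos hqx] at hrk
              linarith
            · exact h0
          have hrk' : F M σ q r ((rank M σ q r h x - 1) + 1) h x < 1 := by
            rwa [Nat.sub_add_cancel hr1]
          obtain ⟨t, htpos, htF⟩ := F_fail M σ q r hrk' hqx hrx
          have hb : ∃ t, 0 < nextD M σ h x t ∧
              F M σ q r (rank M σ q r h x - 1) (x :: h) t < 1 := ⟨t, htpos, htF⟩
          have hstep : ω (k+1) = Classical.choose hb := by
            show (pl M σ q r s (k+1)).2 = _
            rw [pl]
            show gnext M σ q r h x = _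
            rw [gnext, dif_pos hb]
          obtain ⟨hcpos, hcF⟩ := Classical.choose_spec hb
          rw [← hstep] at hcpos hcF
          have hpl1 : (pl M σ q r s (k+1)).1 = x :: h := rfl
          have hpl2 : (pl M σ q r s (k+1)).2 = ω (k+1) := rfl
          have hbad1 : ∃ n, F M σ q r n (x :: h) (ω (k+1)) < 1 := ⟨_, hcF⟩
          have hrank1 : rank M σ q r (x :: h) (ω (k+1)) ≤ rank M σ q r h x - 1 :=
            Nat.sInf_le hcF
          have hrnew : ¬ r (ω (k+1)) := bad_not_r M σ q r hbad1
          by_cases hqnew : q (ω (k+1))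
          · right
            refine ⟨fun j hj => ?_, by rw [hpl1, hpl2]; exact hbad1, ?_⟩
            · rcases Nat.lt_succ_iff_lt_or_eq.mp (Nat.lt_succ_of_le hj) with hlt | heq
              · exact hall j (by omega)
              · rw [heq]; exact ⟨hqnew, hrnew⟩
            · rw [hpl1, hpl2]; omega
          · left
            refine ⟨k+1, le_refl _, hqnew, fun i hi => ?_, fun i hi => (hall i (by omega)).1⟩
            rcases Nat.lt_succ_iff_lt_or_eq.mp (Nat.lt_succ_of_le hi) with hlt | heq
            · exact (hall i (by omega)).2
            · rw [heq]; exact hrnew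
  rcases key (rank M σ q r [] s + 1) with ⟨j, _, hqj, hrj, hqlt⟩ | ⟨_, _, hrank⟩
  · rintro (⟨m, hrm, hqm⟩ | hg)
    · rcases le_or_gt m j with hle | hlt
      · exact hrj m hle hrm
      · exact hqj (hqm j hlt)
    · exact hqj (hg j)
  · omega

end DirA

/-- A state of a finite MDP satisfies `⟨Almost⟩(q W r)` iff, in the two-player
interpretation, Player 1 has a strategy such that all plays from `s` satisfy
`q W r`. -/
theorem almost_weak_until_iff_enforce (M : MDP S A) (q r : S → Prop) (s : S) :
    AlmostWeakUntil M q r s ↔ Enforce M q r s := by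
  constructor
  · rintro ⟨σ, hσ⟩
    exact ⟨σ, wins_of_allgood M σ q r ((prWU_eq_one_iff M σ q r s).mp hσ)⟩
  · rintro ⟨σ, hσ⟩
    refine ⟨σ, (prWU_eq_one_iff M σ q r s).mpr ?_⟩
    by_contra hc
    push_neg at hc
    obtain ⟨n, hn⟩ := hc
    have hlt : F M σ q r n [] s < 1 := lt_of_le_of_ne (F_le_one M σ q r n [] s) hn
    exact spoil M σ q r ⟨n, hlt⟩ (hσ _ rfl (consPlay_pl M σ q r s))
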